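/- arXiv:2205.03487 — 2 statements merged into one kernel-verified Lean document; each statement's English description precedes it below -/
import Mathlib

section
/- Let D=(E,𝓕) be a delta-matroid. If e∈E is a non-orientable ribbon loop of D and f∈E is not a ribbon loop of D, then f is not a ribbon loop of the contraction D/e. -/
open Finset
open scoped symmDiff

noncomputable section

namespace DeltaMatroid

variable {α : Type*} [DecidableEq α]

/-- A delta-matroid on ground set `E` with feasible sets `F`: `F` is nonempty, consists of
subsets of `E`, and satisfies the symmetric exchange axiom. -/
def IsDeltaMatroid (E : Finset α) (F : Finset (Finset α)) : Prop :=
  F.Nonempty ∧ (∀ X ∈ F, X ⊆ E) ∧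
    ∀ X ∈ F, ∀ Y ∈ F, ∀ u ∈ X ∆ Y, ∃ v ∈ X ∆ Y, X ∆ ({u, v} : Finset α) ∈ F

/-- The twist `D * A` of the feasible sets by a subset `A`. -/
def twist (F : Finset (Finset α)) (A : Finset α) : Finset (Finset α) :=
  F.image fun X => A ∆ X

/-- Maximum cardinality of a feasible set. -/
def maxCard (F : Finset (Finset α)) : ℕ := F.sup Finset.card

/-- Minimum cardinality of a feasible set. -/
def minCard (F : Finset (Finset α)) : ℕ := sInf (Finset.card '' (F : Set (Finset α)))

/-- The width `w(D)`. -/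
def width (F : Finset (Finset α)) : ℕ := maxCard F - minCard F

/-- Feasible sets of minimum cardinality. -/
def Fmin (F : Finset (Finset α)) : Finset (Finset α) := F.filter fun X => X.card = minCard F

/-- Feasible sets of maximum cardinality. -/
def Fmax (F : Finset (Finset α)) : Finset (Finset α) := F.filter fun X => X.card = maxCard F

/-- `e` is a ribbon loop: it lies in no minimum-cardinality feasible set. -/
def IsRibbonLoop (F : Finset (Finset α)) (e : α) : Prop := ∀ X ∈ Fmin F, e ∉ X

/-- A ribbon loop is non-orientable if it is also a ribbon loop of `D * e`. -/
def IsNonorientableRibbonLoop (F : Finset (Finset α)) (e : α) : Prop :=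
  IsRibbonLoop F e ∧ IsRibbonLoop (twist F {e}) e

/-- A ribbon loop is orientable if it is not a ribbon loop of `D * e`. -/
def IsOrientableRibbonLoop (F : Finset (Finset α)) (e : α) : Prop :=
  IsRibbonLoop F e ∧ ¬ IsRibbonLoop (twist F {e}) e

/-- `e` is a loop: it lies in no feasible set. -/
def IsLoop (F : Finset (Finset α)) (e : α) : Prop := ∀ X ∈ F, e ∉ X

/-- `e` is a coloop: it lies in every feasible set. -/
def IsColoop (F : Finset (Finset α)) (e : α) : Prop := ∀ X ∈ F, e ∈ X

/-- Contraction `D / e`. -/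
def contract (F : Finset (Finset α)) (e : α) : Finset (Finset α) :=
  if ∀ X ∈ F, e ∉ X then F
  else (F.filter fun X => e ∈ X).image fun X => X.erase e

/-- Deletion `D \ e`. -/
def delete (F : Finset (Finset α)) (e : α) : Finset (Finset α) :=
  if ∀ X ∈ F, e ∈ X then F.image fun X => X.erase e
  else F.filter fun X => e ∉ X

/-- Deletion of every element of `A` (in some order; the order does not matter). -/
def deleteSet (F : Finset (Finset α)) (A : Finset α) : Finset (Finset α) :=
  A.toList.foldl delete F

/-- The restriction `D |_A = D \ (E \ A)` of a delta-matroid with ground set `E`. -/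
def restrict (F : Finset (Finset α)) (E A : Finset α) : Finset (Finset α) :=
  deleteSet F (E \ A)

/-- Feasible sets of the direct sum `D ⊕ D'`. -/
def directSum (F G : Finset (Finset α)) : Finset (Finset α) :=
  (F ×ˢ G).image fun p => p.1 ∪ p.2

/-- A delta-matroid is connected if it is not a direct sum of two delta-matroids on
nonempty ground sets. -/
def IsConnected (E : Finset α) (F : Finset (Finset α)) : Prop :=
  ¬ ∃ (E₁ E₂ : Finset α) (F₁ F₂ : Finset (Finset α)),
      E₁.Nonempty ∧ E₂.Nonempty ∧ Disjoint E₁ E₂ ∧ E = E₁ ∪ E₂ ∧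
      IsDeltaMatroid E₁ F₁ ∧ IsDeltaMatroid E₂ F₂ ∧ F = directSum F₁ F₂

/-- A delta-matroid is even if all feasible sets have the same parity of cardinality. -/
def IsEvenDM (F : Finset (Finset α)) : Prop :=
  ∀ X ∈ F, ∀ Y ∈ F, X.card % 2 = Y.card % 2

variable {ι : Type*} [Fintype ι] [DecidableEq ι]

/-- The feasible sets of `D(C)`: subsets `A` whose principal submatrix `C[A]` is nonsingular
(over `GF(2)`, i.e. has nonzero determinant); `C[∅]` is nonsingular by convention. -/
def binaryFeasible (C : Matrix ι ι (ZMod 2)) : Finset (Finset ι) :=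
  Finset.univ.filter fun A =>
    (C.submatrix (fun x : {a // a ∈ A} => (x : ι)) (fun x : {a // a ∈ A} => (x : ι))).det ≠ 0

/-- The (simple-graph part of the) intersection graph `G_D` of a normal binary delta-matroid
`D(C)`: distinct `u, v` adjacent iff `C u v = 1`.  Loops are recorded by the diagonal of `C`. -/
def interGraph (C : Matrix ι ι (ZMod 2)) : SimpleGraph ι :=
  SimpleGraph.fromRel fun u v => C u v = 1


lemma minCard_le {F : Finset (Finset α)} {X : Finset α} (hX : X ∈ F) :
    minCard F ≤ X.card :=
  Nat.sInf_le ⟨X, by simpa using hX, rfl⟩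

lemma exists_minCard {F : Finset (Finset α)} (hF : F.Nonempty) :
    ∃ X ∈ F, X.card = minCard F := by
  have h : (Finset.card '' (F : Set (Finset α))).Nonempty :=
    ⟨hF.choose.card, hF.choose, hF.choose_spec, rfl⟩
  obtain ⟨X, hX, hc⟩ := Nat.sInf_mem h
  exact ⟨X, by simpa using hX, hc⟩

lemma mem_Fmin {F : Finset (Finset α)} {X : Finset α} :
    X ∈ Fmin F ↔ X ∈ F ∧ X.card = minCard F := Finset.mem_filter

lemma singleton_symmDiff_of_not_mem {X : Finset α} {e : α} (h : e ∉ X) :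
    ({e} : Finset α) ∆ X = insert e X := by
  ext a
  simp only [Finset.mem_symmDiff, Finset.mem_singleton, Finset.mem_insert]
  constructor
  · rintro (⟨rfl, -⟩ | ⟨ha, -⟩) <;> tauto
  · rintro (rfl | ha)
    · exact Or.inl ⟨rfl, h⟩
    · by_cases hae : a = e
      · subst hae; exact Or.inl ⟨rfl, h⟩
      · exact Or.inr ⟨ha, hae⟩

lemma singleton_symmDiff_of_mem {X : Finset α} {e : α} (h : e ∈ X) :
    ({e} : Finset α) ∆ X = X.erase e := by
  ext a
  simp only [Finset.mem_symmDiff, Finset.mem_singleton, Finset.mem_erase]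
  constructor
  · rintro (⟨rfl, ha⟩ | ⟨ha, hae⟩)
    · exact absurd h ha
    · exact ⟨hae, ha⟩
  · rintro ⟨hae, ha⟩
    exact Or.inr ⟨ha, hae⟩

lemma symmDiff_pair_self {X : Finset α} {u : α} (hu : u ∈ X) :
    X ∆ ({u, u} : Finset α) = X.erase u := by
  ext a
  simp only [Finset.mem_symmDiff, Finset.mem_insert, Finset.mem_singleton, Finset.mem_erase,
    or_self]
  constructor
  · rintro (⟨ha, hau⟩ | ⟨rfl, ha⟩)
    · exact ⟨hau, ha⟩
    · exact absurd hu ha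
  · rintro ⟨hau, ha⟩
    exact Or.inl ⟨ha, hau⟩

lemma symmDiff_pair_of_mem_mem {X : Finset α} {u v : α} (hu : u ∈ X) (hv : v ∈ X) :
    X ∆ ({u, v} : Finset α) = (X.erase u).erase v := by
  ext a
  simp only [Finset.mem_symmDiff, Finset.mem_insert, Finset.mem_singleton, Finset.mem_erase]
  constructor
  · rintro (⟨ha, hauv⟩ | ⟨(rfl | rfl), ha⟩)
    · push_neg at hauv; exact ⟨hauv.2, hauv.1, ha⟩
    · exact absurd hu ha
    · exact absurd hv ha
  · rintro ⟨hav, hau, ha⟩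
    exact Or.inl ⟨ha, by tauto⟩

lemma symmDiff_pair_of_mem_not_mem {X : Finset α} {u v : α} (hu : u ∈ X) (hv : v ∉ X) :
    X ∆ ({u, v} : Finset α) = insert v (X.erase u) := by
  ext a
  simp only [Finset.mem_symmDiff, Finset.mem_insert, Finset.mem_singleton, Finset.mem_erase]
  constructor
  · rintro (⟨ha, hauv⟩ | ⟨(rfl | rfl), ha⟩)
    · push_neg at hauv; exact Or.inr ⟨hauv.1, ha⟩
    · exact absurd hu ha
    · exact Or.inl rfl
  · rintro (rfl | ⟨hau, ha⟩)
    · exact Or.inr ⟨Or.inr rfl, hv⟩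
    · refine Or.inl ⟨ha, ?_⟩
      rintro (rfl | rfl)
      · exact hau rfl
      · exact hv ha

/-- If `e` is a non-orientable ribbon loop of a delta-matroid `D` and `f` is not a ribbon loop
of `D`, then `f` is not a ribbon loop of the contraction `D / e`. -/
theorem not_ribbonLoop_contract (E : Finset α) (F : Finset (Finset α))
    (hD : IsDeltaMatroid E F) (e f : α) (he : e ∈ E) (hf : f ∈ E)
    (hne : IsNonorientableRibbonLoop F e) (hnf : ¬ IsRibbonLoop F f) :
    ¬ IsRibbonLoop (contract F e) f := by
  obtain ⟨hFne, hsub, hexch⟩ := hD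
  obtain ⟨hrlD, hrlT⟩ := hne
  set m := minCard F with hm
  -- a minimum feasible set containing f
  have hnf' : ∃ Y ∈ Fmin F, f ∈ Y := by
    unfold IsRibbonLoop at hnf; push_neg at hnf; exact hnf
  obtain ⟨Y, hYmin, hfY⟩ := hnf'
  obtain ⟨hYF, hYcard⟩ := mem_Fmin.mp hYmin
  have heY : e ∉ Y := hrlD Y hYmin
  -- e is not a loop
  have hnotloop : ¬ ∀ X ∈ F, e ∉ X := by
    intro hloop
    have hTne : (twist F {e}).Nonempty := hFne.image _
    obtain ⟨W, hWT, hWc⟩ := exists_minCard hTne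
    obtain ⟨X, hXF, rfl⟩ := Finset.mem_image.mp hWT
    refine hrlT _ (mem_Fmin.mpr ⟨hWT, hWc⟩) ?_
    rw [singleton_symmDiff_of_not_mem (hloop X hXF)]
    exact Finset.mem_insert_self e X
  -- every feasible set containing e has cardinality at least m + 1
  have hcard_ge : ∀ X ∈ F, e ∈ X → m + 1 ≤ X.card := by
    intro X hX heX
    have h1 : m ≤ X.card := minCard_le hX
    rcases eq_or_lt_of_le h1 with h2 | h2
    · exact absurd heX (hrlD X (mem_Fmin.mpr ⟨hX, h2.symm⟩))
    · omega
  -- there is a feasible set of cardinality m + 1 containing e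
  have hSex : ∃ X ∈ F, e ∈ X ∧ X.card = m + 1 := by
    by_contra hS
    push_neg at hS
    have hge : ∀ W ∈ twist F {e}, m + 1 ≤ W.card := by
      intro W hW
      obtain ⟨X, hX, rfl⟩ := Finset.mem_image.mp hW
      by_cases heX : e ∈ X
      · rw [singleton_symmDiff_of_mem heX, Finset.card_erase_of_mem heX]
        have h1 := hcard_ge X hX heX
        have h2 := hS X hX heX
        omega
      · rw [singleton_symmDiff_of_not_mem heX, Finset.card_insert_of_notMem heX]
        have := minCard_le hX
        omega
    have hmemT : ({e} : Finset α) ∆ Y ∈ twist F {e} := Finset.mem_image_of_mem _ hYF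
    have hcY : (({e} : Finset α) ∆ Y).card = m + 1 := by
      rw [singleton_symmDiff_of_not_mem heY, Finset.card_insert_of_notMem heY, hYcard]
    have h1 : minCard (twist F {e}) ≤ m + 1 := hcY ▸ minCard_le hmemT
    have h2 : m + 1 ≤ minCard (twist F {e}) := by
      obtain ⟨W, hWT, hWc⟩ := exists_minCard ⟨_, hmemT⟩
      exact hWc ▸ hge W hWT
    refine hrlT _ (mem_Fmin.mpr ⟨hmemT, by omega⟩) ?_
    rw [singleton_symmDiff_of_not_mem heY]
    exact Finset.mem_insert_self e Y
  -- choose X with e ∈ X, |X| = m + 1, minimizing |X ∆ Y|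
  obtain ⟨X0, hX0F, heX0, hX0c⟩ := hSex
  have hTne : (F.filter fun X => e ∈ X ∧ X.card = m + 1).Nonempty :=
    ⟨X0, Finset.mem_filter.mpr ⟨hX0F, heX0, hX0c⟩⟩
  obtain ⟨X, hXT, hXmin⟩ := Finset.exists_min_image _ (fun X => (X ∆ Y).card) hTne
  obtain ⟨hXF, heX, hXc⟩ : X ∈ F ∧ e ∈ X ∧ X.card = m + 1 := by
    simpa using Finset.mem_filter.mp hXT
  -- claim: X \ Y ⊆ {e}
  have hXY : X \ Y ⊆ {e} := by
    intro u hu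
    rw [Finset.mem_singleton]
    by_contra hue
    obtain ⟨huX, huY⟩ := Finset.mem_sdiff.mp hu
    have huXY : u ∈ X ∆ Y := Finset.mem_symmDiff.mpr (Or.inl ⟨huX, huY⟩)
    obtain ⟨v, hvXY, hZ⟩ := hexch X hXF Y hYF u huXY
    by_cases hvu : v = u
    · subst hvu
      rw [symmDiff_pair_self huX] at hZ
      have hc : (X.erase v).card = m := by
        rw [Finset.card_erase_of_mem huX]; omega
      exact hrlD _ (mem_Fmin.mpr ⟨hZ, hc⟩)
        (Finset.mem_erase.mpr ⟨fun h => hue h.symm, heX⟩)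
    · by_cases hvX : v ∈ X
      · rw [symmDiff_pair_of_mem_mem huX hvX] at hZ
        have hcz := minCard_le hZ
        have hcc : ((X.erase u).erase v).card = X.card - 2 := by
          rw [Finset.card_erase_of_mem (Finset.mem_erase.mpr ⟨hvu, hvX⟩),
            Finset.card_erase_of_mem huX]
          omega
        have h2 : 1 < X.card :=
          Finset.one_lt_card.mpr ⟨u, huX, v, hvX, fun h => hvu h.symm⟩
        omega
      · have hvY : v ∈ Y := by
          rcases Finset.mem_symmDiff.mp hvXY with ⟨h1, _⟩ | ⟨h1, _⟩
          · exact absurd h1 hvX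
          · exact h1
        rw [symmDiff_pair_of_mem_not_mem huX hvX] at hZ
        have hveu : v ∉ X.erase u := fun h => hvX (Finset.mem_of_mem_erase h)
        have hZc : (insert v (X.erase u)).card = m + 1 := by
          rw [Finset.card_insert_of_notMem hveu, Finset.card_erase_of_mem huX]
          omega
        have heZ : e ∈ insert v (X.erase u) :=
          Finset.mem_insert_of_mem (Finset.mem_erase.mpr ⟨fun h => hue h.symm, heX⟩)
        have hZT : insert v (X.erase u) ∈ F.filter fun X => e ∈ X ∧ X.card = m + 1 :=
          Finset.mem_filter.mpr ⟨hZ, heZ, hZc⟩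
        have hle := hXmin _ hZT
        have hpair : ({u, v} : Finset α) ⊆ X ∆ Y := by
          rw [Finset.insert_subset_iff, Finset.singleton_subset_iff]
          exact ⟨huXY, hvXY⟩
        have hZY : insert v (X.erase u) ∆ Y = (X ∆ Y) \ ({u, v} : Finset α) := by
          rw [← symmDiff_pair_of_mem_not_mem huX hvX, symmDiff_right_comm,
            symmDiff_of_ge hpair]
        have hcard2 : ({u, v} : Finset α).card = 2 := Finset.card_pair fun h => hvu h.symm
        have h2 : 1 < (X ∆ Y).card :=
          Finset.one_lt_card.mpr ⟨u, huXY, v, hvXY, fun h => hvu h.symm⟩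
        rw [hZY, Finset.card_sdiff_of_subset hpair, hcard2] at hle
        omega
  -- hence X = insert e Y and f ∈ X
  have hXsub : X ⊆ insert e Y := by
    intro a haX
    by_cases h : a ∈ Y
    · exact Finset.mem_insert_of_mem h
    · have := hXY (Finset.mem_sdiff.mpr ⟨haX, h⟩)
      rw [Finset.mem_singleton] at this
      subst this
      exact Finset.mem_insert_self a Y
  have hXeq : X = insert e Y := by
    refine Finset.eq_of_subset_of_card_le hXsub ?_
    rw [Finset.card_insert_of_notMem heY, hYcard, hXc]
  have hfX : f ∈ X := hXeq ▸ Finset.mem_insert_of_mem hfY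
  -- finish: X.erase e is a minimum feasible set of the contraction containing f
  have hcontr : contract F e = (F.filter fun X => e ∈ X).image fun X => X.erase e :=
    if_neg hnotloop
  have hmemC : X.erase e ∈ contract F e := by
    rw [hcontr]
    exact Finset.mem_image_of_mem _ (Finset.mem_filter.mpr ⟨hXF, heX⟩)
  have hXec : (X.erase e).card = m := by
    rw [Finset.card_erase_of_mem heX]; omega
  have hminC : minCard (contract F e) = m := by
    have h1 : minCard (contract F e) ≤ m := hXec ▸ minCard_le hmemC
    have h2 : m ≤ minCard (contract F e) := by
      obtain ⟨W, hWC, hWc⟩ := exists_minCard ⟨_, hmemC⟩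
      rw [hcontr] at hWC
      obtain ⟨X', hX', rfl⟩ := Finset.mem_image.mp hWC
      obtain ⟨hX'F, heX'⟩ := Finset.mem_filter.mp hX'
      have := hcard_ge X' hX'F heX'
      rw [← hWc, Finset.card_erase_of_mem heX']
      omega
    omega
  intro hrl
  exact hrl _ (mem_Fmin.mpr ⟨hmemC, by rw [hXec, hminC]⟩)
    (Finset.mem_erase.mpr ⟨fun h => heY (h ▸ hfY), hfX⟩)

end DeltaMatroid

end
end

section
/- Let D=(E,𝓕) be a normal delta-matroid and A⊆E. Then w(D*A)=w(D|_A)+w(D|_{A^c}), where A^c=E∖A. -/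
open Finset
open scoped symmDiff

noncomputable section

namespace DeltaMatroid

variable {α : Type*} [DecidableEq α]

variable {ι : Type*} [Fintype ι] [DecidableEq ι]

lemma delete_of_empty_mem (F : Finset (Finset α)) (h : ∅ ∈ F) (e : α) :
    delete F e = F.filter fun X => e ∉ X := by
  unfold delete
  rw [if_neg]
  push_neg
  exact ⟨∅, h, by simp⟩

lemma foldl_delete (l : List α) (F : Finset (Finset α)) (h : ∅ ∈ F) :
    l.foldl delete F = F.filter fun X => ∀ e ∈ l, e ∉ X := by
  induction l generalizing F with
  | nil => simp
  | cons e l ih =>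
    rw [List.foldl_cons, delete_of_empty_mem F h e,
      ih _ (Finset.mem_filter.mpr ⟨h, by simp⟩), Finset.filter_filter]
    apply Finset.filter_congr
    intro X _
    simp only [List.mem_cons]
    constructor
    · rintro ⟨h1, h2⟩ a (rfl | ha)
      · exact h1
      · exact h2 a ha
    · intro hh
      exact ⟨hh e (Or.inl rfl), fun a ha => hh a (Or.inr ha)⟩

lemma restrict_eq_filter (E : Finset α) (F : Finset (Finset α)) (h : ∅ ∈ F)
    (hE : ∀ X ∈ F, X ⊆ E) (A : Finset α) (hA : A ⊆ E) :
    restrict F E A = F.filter fun X => X ⊆ A := by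
  unfold restrict deleteSet
  rw [foldl_delete _ _ h]
  apply Finset.filter_congr
  intro X hX
  simp only [Finset.mem_toList, Finset.mem_sdiff, decide_eq_true_eq]
  constructor
  · intro hh x hx
    by_contra hxA
    exact hh x ⟨hE X hX hx, hxA⟩ hx
  · intro hh e he hex
    exact he.2 (hh hex)

lemma exists_feasible_subset (E : Finset α) (F : Finset (Finset α))
    (hD : IsDeltaMatroid E F) (hnorm : ∅ ∈ F) (B : Finset α) :
    ∀ X ∈ F, ∃ Y ∈ F, Y ⊆ B ∧ (X ∩ B).card ≤ Y.card + (X \ B).card := by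
  have key : ∀ n, ∀ X ∈ F, (X \ B).card ≤ n →
      ∃ Y ∈ F, Y ⊆ B ∧ (X ∩ B).card ≤ Y.card + (X \ B).card := by
    intro n
    induction n with
    | zero =>
      intro X hX h0
      have hXB : X ⊆ B := by
        rwa [Nat.le_zero, Finset.card_eq_zero, Finset.sdiff_eq_empty_iff_subset] at h0
      exact ⟨X, hX, hXB, by simp [Finset.inter_eq_left.mpr hXB]⟩
    | succ n ih =>
      intro X hX hle
      by_cases hXB : X ⊆ B
      · exact ⟨X, hX, hXB, by simp [Finset.inter_eq_left.mpr hXB]⟩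
      · obtain ⟨u, hu⟩ : (X \ B).Nonempty := by rwa [Finset.sdiff_nonempty]
        have huX : u ∈ X := (Finset.mem_sdiff.mp hu).1
        have huB : u ∉ B := (Finset.mem_sdiff.mp hu).2
        have huXY : u ∈ X ∆ (∅ : Finset α) :=
          Finset.mem_symmDiff.mpr (Or.inl ⟨huX, Finset.notMem_empty u⟩)
        obtain ⟨v, hv, hX'⟩ := hD.2.2 X hX ∅ hnorm u huXY
        have hvX : v ∈ X := by
          rcases Finset.mem_symmDiff.mp hv with ⟨h1, _⟩ | ⟨h1, _⟩
          · exact h1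
          · exact absurd h1 (Finset.notMem_empty v)
        set X' := X ∆ ({u, v} : Finset α) with hX'def
        have hX'eq : X' = X \ {u, v} := by
          ext x
          simp only [hX'def, Finset.mem_symmDiff, Finset.mem_sdiff, Finset.mem_insert,
            Finset.mem_singleton]
          constructor
          · rintro (⟨h1, h2⟩ | ⟨h1, h2⟩)
            · exact ⟨h1, h2⟩
            · rcases h1 with rfl | rfl
              · exact absurd huX h2
              · exact absurd hvX h2
          · rintro ⟨h1, h2⟩
            exact Or.inl ⟨h1, h2⟩
        have hX'sub : X' ⊆ X := by
          rw [hX'eq]; exact Finset.sdiff_subset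
        have huX' : u ∉ X' := by
          rw [hX'eq]; simp
        -- b' + 1 ≤ b
        have hb' : (X' \ B).card + 1 ≤ (X \ B).card := by
          have hsub : X' \ B ⊆ (X \ B).erase u := by
            intro x hx
            rw [Finset.mem_erase, Finset.mem_sdiff]
            rcases Finset.mem_sdiff.mp hx with ⟨hx1, hx2⟩
            exact ⟨fun hxu => huX' (hxu ▸ hx1), hX'sub hx1, hx2⟩
          have := Finset.card_le_card hsub
          rw [Finset.card_erase_of_mem hu] at this
          have hbpos : 1 ≤ (X \ B).card := Finset.card_pos.mpr ⟨u, hu⟩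
          omega
        -- a ≤ a' + 1
        have ha : (X ∩ B).card ≤ (X' ∩ B).card + 1 := by
          have hsub : X ∩ B ⊆ insert v (X' ∩ B) := by
            intro x hx
            rcases Finset.mem_inter.mp hx with ⟨hx1, hx2⟩
            rw [Finset.mem_insert]
            by_cases hxv : x = v
            · exact Or.inl hxv
            · refine Or.inr (Finset.mem_inter.mpr ⟨?_, hx2⟩)
              rw [hX'eq, Finset.mem_sdiff]
              refine ⟨hx1, ?_⟩
              simp only [Finset.mem_insert, Finset.mem_singleton]
              rintro (rfl | rfl)
              · exact huB hx2
              · exact hxv rfl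
          calc (X ∩ B).card ≤ (insert v (X' ∩ B)).card := Finset.card_le_card hsub
            _ ≤ (X' ∩ B).card + 1 := Finset.card_insert_le _ _
        obtain ⟨Y, hY, hYB, hYcard⟩ := ih X' hX' (by omega)
        exact ⟨Y, hY, hYB, by omega⟩
  intro X hX
  exact key _ X hX le_rfl

lemma minCard_eq_zero {F : Finset (Finset α)} (h : ∅ ∈ F) : minCard F = 0 := by
  unfold minCard
  exact Nat.sInf_eq_zero.mpr (Or.inl ⟨∅, by simpa using h, Finset.card_empty⟩)

lemma card_symmDiff' (s t : Finset α) : (s ∆ t).card = (s \ t).card + (t \ s).card := by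
  rw [symmDiff_def, Finset.sup_eq_union]
  exact Finset.card_union_of_disjoint disjoint_sdiff_sdiff

/-- For a normal delta-matroid `D` and `A ⊆ E`, `w(D * A) = w(D |_A) + w(D |_{Aᶜ})`. -/
theorem width_twist_eq_add (E : Finset α) (F : Finset (Finset α))
    (hD : IsDeltaMatroid E F) (hnorm : ∅ ∈ F) (A : Finset α) (hA : A ⊆ E) :
    width (twist F A) = width (restrict F E A) + width (restrict F E (E \ A)) := by
  have hE : ∀ X ∈ F, X ⊆ E := hD.2.1
  have hres1 : restrict F E A = F.filter fun X => X ⊆ A :=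
    restrict_eq_filter E F hnorm hE A hA
  have hres2 : restrict F E (E \ A) = F.filter fun X => X ⊆ E \ A :=
    restrict_eq_filter E F hnorm hE (E \ A) Finset.sdiff_subset
  have hmem1 : ∅ ∈ F.filter fun X => X ⊆ A :=
    Finset.mem_filter.mpr ⟨hnorm, Finset.empty_subset A⟩
  have hmem2 : ∅ ∈ F.filter fun X => X ⊆ E \ A :=
    Finset.mem_filter.mpr ⟨hnorm, Finset.empty_subset _⟩
  set s₁ := maxCard (F.filter fun X => X ⊆ A) with hs₁
  set s₂ := maxCard (F.filter fun X => X ⊆ E \ A) with hs₂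
  -- witnesses attaining the maxima
  obtain ⟨Y₁, hY₁mem, hY₁eq⟩ :=
    Finset.exists_mem_eq_sup (F.filter fun X => X ⊆ A) ⟨∅, hmem1⟩ Finset.card
  obtain ⟨Y₂, hY₂mem, hY₂eq⟩ :=
    Finset.exists_mem_eq_sup (F.filter fun X => X ⊆ E \ A) ⟨∅, hmem2⟩ Finset.card
  obtain ⟨hY₁F, hY₁A⟩ := Finset.mem_filter.mp hY₁mem
  obtain ⟨hY₂F, hY₂A⟩ := Finset.mem_filter.mp hY₂mem
  have hY₁card : Y₁.card = s₁ := hY₁eq.symm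
  have hY₂card : Y₂.card = s₂ := hY₂eq.symm
  have hs₁le : s₁ ≤ A.card := hY₁card ▸ Finset.card_le_card hY₁A
  -- maxCard of twist
  have hmax : maxCard (twist F A) = A.card + s₂ := by
    unfold maxCard twist
    rw [Finset.sup_image]
    apply le_antisymm
    · apply Finset.sup_le
      intro X hX
      show (A ∆ X).card ≤ A.card + s₂
      obtain ⟨Y, hYF, hYB, hcard⟩ := exists_feasible_subset E F hD hnorm (E \ A) X hX
      have hYs₂ : Y.card ≤ s₂ :=
        Finset.le_sup (f := Finset.card) (Finset.mem_filter.mpr ⟨hYF, hYB⟩)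
      have hXE : X ⊆ E := hE X hX
      have e1 : X ∩ (E \ A) = X \ A := by
        ext x
        simp only [Finset.mem_inter, Finset.mem_sdiff]
        exact ⟨fun ⟨h1, _, h3⟩ => ⟨h1, h3⟩, fun ⟨h1, h2⟩ => ⟨h1, hXE h1, h2⟩⟩
      have e2 : X \ (E \ A) = X ∩ A := by
        ext x
        simp only [Finset.mem_inter, Finset.mem_sdiff, not_and, not_not]
        exact ⟨fun ⟨h1, h2⟩ => ⟨h1, h2 (hXE h1)⟩, fun ⟨h1, h2⟩ => ⟨h1, fun _ => h2⟩⟩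
      rw [e1, e2] at hcard
      have e3 : (A \ X).card + (A ∩ X).card = A.card := Finset.card_sdiff_add_card_inter A X
      have e4 : (X ∩ A).card = (A ∩ X).card := by rw [Finset.inter_comm]
      rw [card_symmDiff']
      omega
    · have h2 : (A ∆ Y₂).card = A.card + s₂ := by
        rw [card_symmDiff']
        have d1 : A \ Y₂ = A := by
          rw [Finset.sdiff_eq_self_iff_disjoint]
          exact Finset.disjoint_left.mpr fun x hxA hxY =>
            (Finset.mem_sdiff.mp (hY₂A hxY)).2 hxA
        have d2 : Y₂ \ A = Y₂ := by
          rw [Finset.sdiff_eq_self_iff_disjoint]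
          exact Finset.disjoint_left.mpr fun x hxY hxA =>
            (Finset.mem_sdiff.mp (hY₂A hxY)).2 hxA
        rw [d1, d2, hY₂card]
      have h1 : (Finset.card ∘ fun X => A ∆ X) Y₂ ≤ F.sup (Finset.card ∘ fun X => A ∆ X) :=
        Finset.le_sup hY₂F
      exact le_trans (le_of_eq h2.symm) h1
  -- minCard of twist
  have hmin : minCard (twist F A) = A.card - s₁ := by
    unfold minCard
    apply le_antisymm
    · have hm : A ∆ Y₁ ∈ twist F A := Finset.mem_image_of_mem _ hY₁F
      have hc : (A ∆ Y₁).card = A.card - s₁ := by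
        rw [card_symmDiff', Finset.sdiff_eq_empty_iff_subset.mpr hY₁A,
          Finset.card_empty, Finset.card_sdiff_of_subset hY₁A, hY₁card, Nat.add_zero]
      exact Nat.sInf_le ⟨A ∆ Y₁, Finset.mem_coe.mpr hm, hc⟩
    · apply le_csInf
      · exact Set.Nonempty.image _ ⟨A ∆ ∅, Finset.mem_coe.mpr (Finset.mem_image_of_mem _ hnorm)⟩
      · rintro z ⟨Z, hZ, rfl⟩
        simp only [twist, Finset.mem_coe, Finset.mem_image] at hZ
        obtain ⟨X, hX, rfl⟩ := hZ
        obtain ⟨Y, hYF, hYB, hcard⟩ := exists_feasible_subset E F hD hnorm A X hX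
        have hYs₁ : Y.card ≤ s₁ :=
          Finset.le_sup (f := Finset.card) (Finset.mem_filter.mpr ⟨hYF, hYB⟩)
        have e3 : (A \ X).card + (A ∩ X).card = A.card := Finset.card_sdiff_add_card_inter A X
        have e4 : (X ∩ A).card = (A ∩ X).card := by rw [Finset.inter_comm]
        rw [card_symmDiff']
        omega
  have hw1 : width (restrict F E A) = s₁ := by
    rw [hres1]; unfold width
    rw [minCard_eq_zero hmem1, Nat.sub_zero]
  have hw2 : width (restrict F E (E \ A)) = s₂ := by
    rw [hres2]; unfold width
    rw [minCard_eq_zero hmem2, Nat.sub_zero]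
  rw [hw1, hw2]
  unfold width
  rw [hmax, hmin]
  omega

end DeltaMatroid

end
end
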